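/- Let H₀ > 0, a ≥ 1, and S_s > 0 be real constants, and let S : [0, ∞) → ℝ be a differentiable function satisfying the ODE S′(t) = H₀·|1 − S(t)/S_s|^a · sign(1 − S(t)/S_s) for all t ≥ 0, with initial value 0 < S(0) < S_s. Then S(t) < S_s for all t ≥ 0, and S is strictly monotone increasing on [0, ∞). -/
import Mathlib


/-- Saturation-type hardening law: if S′(t) = H₀·|1 − S(t)/S_s|^a·sign(1 − S(t)/S_s) for
all t ≥ 0 with 0 < S(0) < S_s, then S stays below S_s and is strictly increasing on
[0, ∞). -/
theorem hardening_law_monotone_no_overshoot (H₀ a Ss : ℝ)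
    (hH₀ : 0 < H₀) (ha : 1 ≤ a) (hSs : 0 < Ss)
    (S : ℝ → ℝ)
    (hODE : ∀ t : ℝ, 0 ≤ t →
      HasDerivAt S (H₀ * |1 - S t / Ss| ^ a * Real.sign (1 - S t / Ss)) t)
    (h0pos : 0 < S 0) (h0lt : S 0 < Ss) :
    (∀ t : ℝ, 0 ≤ t → S t < Ss) ∧ StrictMonoOn S (Set.Ici 0) := by
  -- notation for the derivative value
  set D : ℝ → ℝ := fun t => H₀ * |1 - S t / Ss| ^ a * Real.sign (1 - S t / Ss) with hD
  have hcont : ∀ t : ℝ, 0 ≤ t → ContinuousAt S t := fun t ht => (hODE t ht).continuousAt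
  -- value of D when S t < Ss
  have hDval : ∀ t : ℝ, S t < Ss → D t = H₀ * (1 - S t / Ss) ^ a := by
    intro t hlt
    have hx : 0 < 1 - S t / Ss := by
      have : S t / Ss < 1 := (div_lt_one hSs).2 hlt
      linarith
    simp [hD, abs_of_pos hx, Real.sign_of_pos hx]
  have hDpos : ∀ t : ℝ, S t < Ss → 0 < D t := by
    intro t hlt
    have hx : 0 < 1 - S t / Ss := by
      have : S t / Ss < 1 := (div_lt_one hSs).2 hlt
      linarith
    rw [hDval t hlt]
    exact mul_pos hH₀ (Real.rpow_pos_of_pos hx a)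
  -- Part A: no overshoot
  have keyA : ∀ t : ℝ, 0 ≤ t → S t < Ss := by
    by_contra hcon
    push_neg at hcon
    obtain ⟨t₁, ht₁, hge⟩ := hcon
    set A : Set ℝ := {t | 0 ≤ t ∧ Ss ≤ S t} with hA
    have hAne : A.Nonempty := ⟨t₁, ht₁, hge⟩
    have hAbdd : BddBelow A := ⟨0, fun x hx => hx.1⟩
    set t₀ : ℝ := sInf A with ht₀def
    have ht₀0 : 0 ≤ t₀ := le_csInf hAne fun x hx => hx.1
    -- every point below t₀ is not in A
    have hbelow : ∀ t : ℝ, 0 ≤ t → t < t₀ → S t < Ss := by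
      intro t ht htlt
      by_contra hc
      push_neg at hc
      exact absurd (csInf_le hAbdd ⟨ht, hc⟩) (not_le.2 htlt)
    -- S t₀ ≥ Ss
    have hSt₀ : Ss ≤ S t₀ := by
      by_contra hc
      push_neg at hc
      have hev : ∀ᶠ s in nhds t₀, S s < Ss :=
        (hcont t₀ ht₀0).eventually (Filter.tendsto_id.eventually_lt_const hc)
      obtain ⟨δ, hδpos, hδ⟩ := Metric.eventually_nhds_iff.1 hev
      have hlb : t₀ + δ / 2 ≤ t₀ := by
        apply le_csInf hAne
        intro x hx
        by_contra hxc
        push_neg at hxc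
        have hxge : t₀ ≤ x := csInf_le hAbdd hx
        have : dist x t₀ < δ := by
          rw [Real.dist_eq, abs_of_nonneg (by linarith)]
          linarith
        exact absurd (hδ this) (not_lt.2 hx.2)
      linarith
    have ht₀pos : 0 < t₀ := by
      rcases lt_or_eq_of_le ht₀0 with h | h
      · exact h
      · exfalso; rw [← h] at hSt₀; linarith
    -- S is strictly monotone on [0, t₀], hence S t ≥ S 0 > 0 on [0, t₀)
    have hcontIcc : ContinuousOn S (Set.Icc 0 t₀) := fun x hx =>
      (hcont x hx.1).continuousWithinAt
    have hmono : StrictMonoOn S (Set.Icc 0 t₀) := by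
      apply strictMonoOn_of_deriv_pos (convex_Icc 0 t₀) hcontIcc
      intro x hx
      rw [interior_Icc] at hx
      rw [(hODE x hx.1.le).deriv]
      exact hDpos x (hbelow x hx.1.le hx.2)
    have hSpos : ∀ t : ℝ, 0 ≤ t → t < t₀ → 0 < S t := by
      intro t ht htlt
      rcases eq_or_lt_of_le ht with h | h
      · rwa [← h]
      · have := hmono (Set.mem_Icc.2 ⟨le_refl 0, ht₀pos.le⟩)
          (Set.mem_Icc.2 ⟨ht, htlt.le⟩) h
        linarith
    -- barrier function w
    set K : ℝ := H₀ / Ss with hK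
    set w : ℝ → ℝ := fun t => (Ss - S t) * Real.exp (K * t) with hw
    have hwderiv : ∀ t : ℝ, 0 ≤ t →
        HasDerivAt w ((-(D t)) * Real.exp (K * t) + (Ss - S t) * (K * Real.exp (K * t))) t := by
      intro t ht
      exact ((hODE t ht).const_sub Ss).mul
        (((Real.hasDerivAt_exp (K * t)).comp t ((hasDerivAt_id t).const_mul K)).congr_deriv
          (by ring))
    have hwderiv_nonneg : ∀ t : ℝ, t ∈ Set.Ioo (0:ℝ) t₀ →
        0 ≤ (-(D t)) * Real.exp (K * t) + (Ss - S t) * (K * Real.exp (K * t)) := by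
      intro t ht
      have hlt : S t < Ss := hbelow t ht.1.le ht.2
      have hSt : 0 < S t := hSpos t ht.1.le ht.2
      have hx : 0 < 1 - S t / Ss := by
        have : S t / Ss < 1 := (div_lt_one hSs).2 hlt
        linarith
      have hx1 : 1 - S t / Ss ≤ 1 := by
        have : 0 ≤ S t / Ss := le_of_lt (div_pos hSt hSs)
        linarith
      have hrpow : (1 - S t / Ss) ^ a ≤ (1 - S t / Ss) := by
        calc (1 - S t / Ss) ^ a ≤ (1 - S t / Ss) ^ (1:ℝ) :=
              Real.rpow_le_rpow_of_exponent_ge hx hx1 ha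
          _ = 1 - S t / Ss := Real.rpow_one _
      have hDle : D t ≤ K * (Ss - S t) := by
        rw [hDval t hlt]
        have : H₀ * (1 - S t / Ss) ^ a ≤ H₀ * (1 - S t / Ss) :=
          mul_le_mul_of_nonneg_left hrpow hH₀.le
        calc H₀ * (1 - S t / Ss) ^ a ≤ H₀ * (1 - S t / Ss) := this
          _ = K * (Ss - S t) := by
              rw [hK]; field_simp
      have hexp : 0 < Real.exp (K * t) := Real.exp_pos _
      nlinarith [hexp]
    -- w is monotone on [0, t₀]
    have hwmono : MonotoneOn w (Set.Icc 0 t₀) := by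
      apply monotoneOn_of_deriv_nonneg (convex_Icc 0 t₀)
      · intro x hx
        exact ((hwderiv x hx.1).continuousAt).continuousWithinAt
      · intro x hx
        rw [interior_Icc] at hx
        exact ((hwderiv x hx.1.le).differentiableAt).differentiableWithinAt
      · intro x hx
        rw [interior_Icc] at hx
        rw [(hwderiv x hx.1.le).deriv]
        exact hwderiv_nonneg x hx
    have hw0 : 0 < w 0 := by
      simp only [hw, mul_zero, Real.exp_zero, mul_one]
      linarith
    have hwt₀ : w t₀ ≤ 0 := by
      have : Ss - S t₀ ≤ 0 := by linarith
      exact mul_nonpos_of_nonpos_of_nonneg this (Real.exp_pos _).le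
    have := hwmono (Set.mem_Icc.2 ⟨le_refl 0, ht₀pos.le⟩)
      (Set.mem_Icc.2 ⟨ht₀0, le_refl t₀⟩) ht₀pos.le
    linarith
  -- Part B: strict monotonicity
  refine ⟨keyA, ?_⟩
  apply strictMonoOn_of_deriv_pos (convex_Ici 0)
  · intro x hx
    exact (hcont x hx).continuousWithinAt
  · intro x hx
    rw [interior_Ici] at hx
    rw [(hODE x hx.le).deriv]
    exact hDpos x (keyA x hx.le)
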